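/- Soundness of the fixpoint computation: for every ground program P, every model f of P, and every k ∈ ℕ, T_P^[k](⊥)(a) ≤ f(a) for all atoms a ∈ A, where ⊥ is the interpretation mapping every atom to v_0. -/

import Mathlib

namespace FLLP

def CL {n : ℕ} (x y : Fin (n+1)) : Fin (n+1) :=
  ⟨x.val + y.val - n, by have := x.isLt; have := y.isLt; omega⟩

def RL {n : ℕ} (j i : Fin (n+1)) : Fin (n+1) :=
  if h : i ≤ j then ⟨n, n.lt_succ_self⟩
  else ⟨n + j.val - i.val, by
    have h' : j.val < i.val := Fin.lt_def.mp (lt_of_not_ge h)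
    have := i.isLt; omega⟩

def RG {n : ℕ} (j i : Fin (n+1)) : Fin (n+1) :=
  if i ≤ j then ⟨n, n.lt_succ_self⟩ else j

inductive Body (A H : Type) : Type where
  | atom : A → Body A H
  | andG : Body A H → Body A H → Body A H
  | andL : Body A H → Body A H → Body A H
  | or   : Body A H → Body A H → Body A H
  | hedge : H → Body A H → Body A H
  deriving DecidableEq

def eval {n : ℕ} {A H : Type} (hinv : H → Fin (n+1) → Fin (n+1))
    (f : A → Fin (n+1)) : Body A H → Fin (n+1)
  | .atom a => f a
  | .andG B₁ B₂ => min (eval hinv f B₁) (eval hinv f B₂)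
  | .andL B₁ B₂ => CL (eval hinv f B₁) (eval hinv f B₂)
  | .or B₁ B₂ => max (eval hinv f B₁) (eval hinv f B₂)
  | .hedge h B => hinv h (eval hinv f B)

inductive Imp : Type where
  | luka : Imp
  | godel : Imp
  deriving DecidableEq

def tnorm {n : ℕ} : Imp → Fin (n+1) → Fin (n+1) → Fin (n+1)
  | .luka => CL
  | .godel => min

def implicator {n : ℕ} : Imp → Fin (n+1) → Fin (n+1) → Fin (n+1)
  | .luka => RL
  | .godel => RG

structure Program (n : ℕ) (A H : Type) [DecidableEq A] [DecidableEq H] : Type where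
  rules : Finset (A × Body A H × Fin (n+1) × Imp)
  facts : Finset (A × Fin (n+1))

noncomputable def TP {n : ℕ} {A H : Type} [DecidableEq A] [DecidableEq H]
    (P : Program n A H) (hinv : H → Fin (n+1) → Fin (n+1))
    (f : A → Fin (n+1)) : A → Fin (n+1) := fun a =>
  max ((P.rules.filter (fun R => R.1 = a)).sup
        (fun R => tnorm R.2.2.2 (eval hinv f R.2.1) R.2.2.1))
      ((P.facts.filter (fun F => F.1 = a)).sup (fun F => F.2))

def isModel {n : ℕ} {A H : Type} [DecidableEq A] [DecidableEq H]
    (P : Program n A H) (hinv : H → Fin (n+1) → Fin (n+1))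
    (f : A → Fin (n+1)) : Prop :=
  (∀ R ∈ P.rules, R.2.2.1 ≤ implicator R.2.2.2 (f R.1) (eval hinv f R.2.1)) ∧
  (∀ F ∈ P.facts, F.2 ≤ f F.1)

lemma CL_le_CL {n : ℕ} {x x' y y' : Fin (n+1)} (hx : x ≤ x') (hy : y ≤ y') :
    CL x y ≤ CL x' y' := by
  simp only [CL, Fin.le_def] at *
  omega

lemma tnorm_le_tnorm_left {n : ℕ} (i : Imp) {x x' : Fin (n+1)} (hx : x ≤ x') (r : Fin (n+1)) :
    tnorm i x r ≤ tnorm i x' r := by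
  cases i
  · exact CL_le_CL hx le_rfl
  · exact min_le_min_right r hx

lemma tnorm_le_iff_le_implicator {n : ℕ} (i : Imp) (x r y : Fin (n+1)) :
    tnorm i x r ≤ y ↔ r ≤ implicator i y x := by
  cases i
  · have := r.isLt
    simp only [tnorm, implicator, CL, RL]
    split_ifs <;> simp only [Fin.le_def] at * <;> omega
  · simp only [tnorm, implicator, RG]
    split_ifs with hxy
    · exact iff_of_true (min_le_of_left_le hxy) (Fin.le_last r)
    · rw [min_le_iff, or_iff_right hxy]

lemma eval_mono {n : ℕ} {A H : Type} {hinv : H → Fin (n+1) → Fin (n+1)}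
    (hmono : ∀ h, Monotone (hinv h)) (B : Body A H) :
    Monotone fun f : A → Fin (n+1) => eval hinv f B := by
  intro g f hgf
  induction B with
  | atom a => exact hgf a
  | andG B₁ B₂ ih₁ ih₂ => exact min_le_min ih₁ ih₂
  | andL B₁ B₂ ih₁ ih₂ => exact CL_le_CL ih₁ ih₂
  | or B₁ B₂ ih₁ ih₂ => exact max_le_max ih₁ ih₂
  | hedge h B ih => exact hmono h ih

section TP

variable {n : ℕ} {A H : Type} [DecidableEq A] [DecidableEq H]
  {P : Program n A H} {hinv : H → Fin (n+1) → Fin (n+1)}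

lemma TP_mono (hmono : ∀ h, Monotone (hinv h)) : Monotone (TP P hinv) := by
  intro g f hgf a
  refine max_le_max (Finset.sup_mono_fun fun R _ => ?_) le_rfl
  exact tnorm_le_tnorm_left R.2.2.2 (eval_mono hmono R.2.1 hgf) R.2.2.1

lemma isModel.TP_le {f : A → Fin (n+1)} (hf : isModel P hinv f) : TP P hinv f ≤ f := by
  intro a
  refine max_le (Finset.sup_le fun R hR => ?_) (Finset.sup_le fun F hF => ?_)
  · obtain ⟨hRP, rfl⟩ := Finset.mem_filter.mp hR
    exact (tnorm_le_iff_le_implicator _ _ _ _).mpr (hf.1 R hRP)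
  · obtain ⟨hFP, rfl⟩ := Finset.mem_filter.mp hF
    exact hf.2 F hFP

end TP

/-- Models are exactly the prefixpoints of the monotone operator `TP`, so every iterate from `⊥`
stays below each of them. -/
theorem TP_iterate_le_model_general (n : ℕ) (A H : Type)
    [DecidableEq A] [DecidableEq H]
    (hinv : H → Fin (n+1) → Fin (n+1)) (hmono : ∀ h, Monotone (hinv h))
    (P : Program n A H)
    (f : A → Fin (n+1)) (hf : isModel P hinv f) (k : ℕ) :
    ∀ a, (TP P hinv)^[k] (fun _ => 0) a ≤ f a :=
  ((TP_mono hmono).iterate k fun _ => Fin.zero_le _).trans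
    ((TP_mono hmono).antitone_iterate_of_map_le hf.TP_le k.zero_le)

theorem TP_iterate_le_model (n : ℕ) (hn : 1 ≤ n) (A H : Type) [Fintype A] [Fintype H]
    [DecidableEq A] [DecidableEq H]
    (hinv : H → Fin (n+1) → Fin (n+1)) (hmono : ∀ h, Monotone (hinv h))
    (P : Program n A H)
    (f : A → Fin (n+1)) (hf : isModel P hinv f) (k : ℕ) :
    ∀ a, (TP P hinv)^[k] (fun _ => 0) a ≤ f a :=
  TP_iterate_le_model_general n A H hinv hmono P f hf k

end FLLP
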